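/- The Hermite subdivision operator S_{a^2} of order 1 with mask a^2 supported on {−2,…,2} given by a^2_{−2} = [[7/96, −25/1344],[77/384, −19/384]], a^2_{−1} = [[1/2, −5/56],[7/12, −1/24]], a^2_0 = [[41/48, 0],[0, 19/96]], a^2_1 = [[1/2, 5/56],[−7/12, −1/24]], a^2_2 = [[7/96, 25/1344],[−77/384, −19/384]] satisfies the spectral condition of order 2 with spectral polynomials 1, x, x²/2 − 1/21, but does not satisfy the spectral condition of order 3. -/

import Mathlib

/-!
A mask supported on `[-2, 2]` makes `(S_A c)(2q)` depend only on `c(q-1), c(q), c(q+1)` and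
`(S_A c)(2q+1)` only on `c(q), c(q+1)`, so an eigen-relation `S_A c = μ c` is a pair of vector
identities indexed by `q`. For `1, x, x²/2 - 1/21` these are polynomial identities in `q`. For a
cubic `p` with leading coefficient `1/6`, the derivative rows at `j = 0` and at `j = ±1` force two
different values of `p'(0)`.
-/

noncomputable def subd {d : ℕ} (A : ℤ → Matrix (Fin (d+1)) (Fin (d+1)) ℝ)
    (c : ℤ → Fin (d+1) → ℝ) : ℤ → Fin (d+1) → ℝ :=
  fun j => ∑ᶠ k : ℤ, (A (j - 2*k)).mulVec (c k)

noncomputable def vF (d : ℕ) (f : ℝ → ℝ) : ℤ → Fin (d+1) → ℝ :=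
  fun j m => iteratedDeriv (m : ℕ) f (j : ℝ)

noncomputable def vP (d : ℕ) (p : Polynomial ℝ) : ℤ → Fin (d+1) → ℝ :=
  fun j m => (Polynomial.derivative^[(m : ℕ)] p).eval (j : ℝ)

noncomputable def Dinv (d n : ℕ) (c : ℤ → Fin (d+1) → ℝ) : ℤ → Fin (d+1) → ℝ :=
  fun j m => (2:ℝ)^(n * (m:ℕ)) * c j m

def Reproduces {d : ℕ} (A : ℤ → Matrix (Fin (d+1)) (Fin (d+1)) ℝ) (τ : ℝ) (f : ℝ → ℝ) : Prop :=
  ∀ (n : ℕ) (j : ℤ) (m : Fin (d+1)),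
    Dinv d n ((subd A)^[n] (fun i m => iteratedDeriv (m:ℕ) f ((i:ℝ)+τ))) j m
      = iteratedDeriv (m:ℕ) f (((2:ℝ)^n)⁻¹ * ((j:ℝ)+τ))

noncomputable def a1 (j : ℤ) : Matrix (Fin 2) (Fin 2) ℝ :=
  if j = -2 then !![1/128, 7/256; 0, 1/16]
  else if j = -1 then !![1/2, -1/16; 15/16, -7/32]
  else if j = 0 then !![63/64, 0; 0, 3/8]
  else if j = 1 then !![1/2, 1/16; -15/16, -7/32]
  else if j = 2 then !![1/128, -7/256; 0, 1/16]
  else 0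

noncomputable def a2 (j : ℤ) : Matrix (Fin 2) (Fin 2) ℝ :=
  if j = -2 then !![7/96, -25/1344; 77/384, -19/384]
  else if j = -1 then !![1/2, -5/56; 7/12, -1/24]
  else if j = 0 then !![41/48, 0; 0, 19/96]
  else if j = 1 then !![1/2, 5/56; -7/12, -1/24]
  else if j = 2 then !![7/96, 25/1344; -77/384, -19/384]
  else 0

open Matrix

section Mask

variable {d : ℕ} {A : ℤ → Matrix (Fin (d+1)) (Fin (d+1)) ℝ}

lemma subd_apply_eq_sum (hA : Function.support A ⊆ Set.Icc (-2) 2)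
    (c : ℤ → Fin (d+1) → ℝ) (j : ℤ) {s : Finset ℤ} (hs : ∀ k, j - 2*k ∈ Set.Icc (-2) 2 → k ∈ s) :
    subd A c j = ∑ k ∈ s, A (j - 2*k) *ᵥ c k :=
  finsum_eq_sum_of_support_subset _ fun k hk =>
    hs k (hA fun h0 => hk (by simp only [h0, zero_mulVec]))

lemma subd_apply_even (hA : Function.support A ⊆ Set.Icc (-2) 2) (c : ℤ → Fin (d+1) → ℝ)
    (q : ℤ) : subd A c (2*q) = A 2 *ᵥ c (q-1) + A 0 *ᵥ c q + A (-2) *ᵥ c (q+1) := by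
  have hs (k : ℤ) (hk : 2*q - 2*k ∈ Set.Icc (-2) 2) : k ∈ ({q-1, q, q+1} : Finset ℤ) := by
    simp only [Set.mem_Icc, Finset.mem_insert, Finset.mem_singleton] at hk ⊢
    omega
  have hq : q - 1 ∉ ({q, q+1} : Finset ℤ) := by
    simp only [Finset.mem_insert, Finset.mem_singleton]
    omega
  rw [subd_apply_eq_sum hA c _ hs, Finset.sum_insert hq, Finset.sum_pair (by simp), ← add_assoc]
  ring_nf

lemma subd_apply_odd (hA : Function.support A ⊆ Set.Icc (-2) 2) (c : ℤ → Fin (d+1) → ℝ)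
    (q : ℤ) : subd A c (2*q+1) = A 1 *ᵥ c q + A (-1) *ᵥ c (q+1) := by
  have hs (k : ℤ) (hk : 2*q + 1 - 2*k ∈ Set.Icc (-2) 2) : k ∈ ({q, q+1} : Finset ℤ) := by
    simp only [Set.mem_Icc, Finset.mem_insert, Finset.mem_singleton] at hk ⊢
    omega
  rw [subd_apply_eq_sum hA c _ hs, Finset.sum_pair (by simp)]
  ring_nf

lemma subd_eq_smul_iff (hA : Function.support A ⊆ Set.Icc (-2) 2) (c : ℤ → Fin (d+1) → ℝ)
    (μ : ℝ) :
    subd A c = (fun j => μ • c j) ↔ ∀ q,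
      A 2 *ᵥ c (q-1) + A 0 *ᵥ c q + A (-2) *ᵥ c (q+1) = μ • c (2*q) ∧
      A 1 *ᵥ c q + A (-1) *ᵥ c (q+1) = μ • c (2*q+1) := by
  refine ⟨fun h q => ?_, fun h => funext fun j => ?_⟩
  · rw [← subd_apply_even hA, ← subd_apply_odd hA, h]
    exact ⟨rfl, rfl⟩
  · obtain ⟨q, rfl | rfl⟩ := Int.even_or_odd' j
    · rw [subd_apply_even hA, (h q).1]
    · rw [subd_apply_odd hA, (h q).2]

end Mask

lemma vF_one_eq_of_hasDerivAt {f f' : ℝ → ℝ} (hf : ∀ x, HasDerivAt f (f' x) x) :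
    vF 1 f = fun j : ℤ => ![f j, f' j] := by
  funext j m
  fin_cases m
  · simp [vF]
  · simp [vF, (hf _).deriv]

lemma a2_support : Function.support a2 ⊆ Set.Icc (-2) 2 := by
  intro m hm
  by_contra hm'
  simp only [Set.mem_Icc] at hm'
  exact hm (by simp only [a2]; split_ifs <;> first | rfl | omega)

lemma subd_a2_vF_cubic_ne (a b c : ℝ) :
    subd a2 (vF 1 (fun x => x^3/6 + a*x^2 + b*x + c))
      ≠ fun j => ((2:ℝ)^(3:ℕ))⁻¹ • vF 1 (fun x => x^3/6 + a*x^2 + b*x + c) j := by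
  intro h
  have hcubic (x : ℝ) :
      HasDerivAt (fun x => x^3/6 + a*x^2 + b*x + c) (x^2/2 + 2*a*x + b) x :=
    ((((hasDerivAt_pow 3 x).div_const 6).add ((hasDerivAt_pow 2 x).const_mul a)).add
      ((hasDerivAt_id x).const_mul b)).add_const c |>.congr_deriv (by ring)
  rw [vF_one_eq_of_hasDerivAt hcubic, subd_eq_smul_iff a2_support] at h
  have at_zero := congrFun (h 0).1 1
  have at_one := congrFun (h 0).2 1
  have at_neg_one := congrFun (h (-1)).2 1
  norm_num [a2] at at_zero at_one at_neg_one
  have hb_zero : b = -5/108 := by linarith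
  have hb_one : b = -1/27 := by linarith
  linarith

theorem a2_spectral_order_two_not_three :
    ((subd a2 (vF 1 (fun _ => (1:ℝ))) = fun j => ((2:ℝ)^(0:ℕ))⁻¹ • vF 1 (fun _ => (1:ℝ)) j)
  ∧ (subd a2 (vF 1 (fun x => x)) = fun j => ((2:ℝ)^(1:ℕ))⁻¹ • vF 1 (fun x => x) j)
  ∧ (subd a2 (vF 1 (fun x => x^2/2 - 1/21))
      = fun j => ((2:ℝ)^(2:ℕ))⁻¹ • vF 1 (fun x => x^2/2 - 1/21) j))
  ∧ ¬ ∃ a b c : ℝ,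
      subd a2 (vF 1 (fun x => x^3/6 + a*x^2 + b*x + c))
        = fun j => ((2:ℝ)^(3:ℕ))⁻¹ • vF 1 (fun x => x^3/6 + a*x^2 + b*x + c) j := by
  refine ⟨⟨?_, ?_, ?_⟩, ?_⟩
  · rw [vF_one_eq_of_hasDerivAt fun x => hasDerivAt_const x 1, subd_eq_smul_iff a2_support]
    intro q
    constructor <;> ext m <;> fin_cases m <;> norm_num [a2]
  · rw [vF_one_eq_of_hasDerivAt hasDerivAt_id', subd_eq_smul_iff a2_support]
    intro q
    constructor <;> ext m <;> fin_cases m <;> simp [a2] <;> ring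
  · have hquad (x : ℝ) : HasDerivAt (fun x => x^2/2 - 1/21) x x :=
      (((hasDerivAt_pow 2 x).div_const 2).sub_const _).congr_deriv (by ring)
    rw [vF_one_eq_of_hasDerivAt hquad, subd_eq_smul_iff a2_support]
    intro q
    constructor <;> ext m <;> fin_cases m <;> simp [a2] <;> ring
  · rintro ⟨a, b, c, h⟩
    exact subd_a2_vF_cubic_ne a b c h
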